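/- arXiv:1907.11590 — 2 statements merged into one kernel-verified Lean document; each statement's English description precedes it below -/
import Mathlib

section
/- Let G be a finite simple graph with no isolated vertices and 1 ≤ δ(G) ≤ 2. Then γ_t(G) = 2μ*(G) if and only if there exists a maximal matching M in G admitting a partition M = M⁺ ∪ M⁻ ∪ M* satisfying: (i) M⁺ is a perfect matching of the subgraph of G induced by S⁺(G); (ii) every vertex of S⁻(G) is covered by M⁻ and every edge of M⁻ joins a vertex of S⁻(G) to a vertex of V(G) \ sup(G); (iii) for every vertex v ∈ S⁻(G) ∪ V(M*), the partner M_p(v) is the unique neighbor of v among the vertices of V(M); (iv) for every two distinct vertices u, v ∈ S⁻(G) ∪ V(M*), if u and v have a common neighbor then there exists a vertex whose neighborhood is exactly {M_p(u), M_p(v)}. -/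
open SimpleGraph

namespace TotalDomMM

variable {V : Type*}

/-- `M` is a maximal matching of `G`: a matching not contained in a larger matching. -/
def IsMaximalMatching (G : SimpleGraph V) (M : G.Subgraph) : Prop :=
  M.IsMatching ∧
    ∀ M' : G.Subgraph, M'.IsMatching → M.edgeSet ⊆ M'.edgeSet → M.edgeSet = M'.edgeSet

/-- `μ*(G)`: the minimum cardinality of a maximal matching of `G`. -/
noncomputable def muStar (G : SimpleGraph V) : ℕ :=
  sInf {n | ∃ M : G.Subgraph, IsMaximalMatching G M ∧ M.edgeSet.ncard = n}

/-- `S` is a total dominating set of `G`: every vertex has a neighbor in `S`. -/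
def IsTotalDomSet (G : SimpleGraph V) (S : Set V) : Prop :=
  ∀ v : V, ∃ u ∈ S, G.Adj v u

/-- `γ_t(G)`: the minimum cardinality of a total dominating set of `G`. -/
noncomputable def gammaT (G : SimpleGraph V) : ℕ :=
  sInf {n | ∃ S : Set V, IsTotalDomSet G S ∧ S.ncard = n}

/-- `δ(G)`: the minimum degree of `G`. -/
noncomputable def minDeg (G : SimpleGraph V) : ℕ :=
  sInf {k | ∃ v : V, (G.neighborSet v).ncard = k}

/-- `G` has no isolated vertices. -/
def NoIsolated (G : SimpleGraph V) : Prop := ∀ v : V, ∃ u : V, G.Adj v u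

/-- `sup(G)`: the set of support vertices, i.e. vertices adjacent to a leaf
(a vertex of degree one). -/
def supSet (G : SimpleGraph V) : Set V :=
  {v | ∃ u, G.Adj v u ∧ (G.neighborSet u).ncard = 1}

/-- `S⁺(G)`: support vertices adjacent to some support vertex. -/
def supPlus (G : SimpleGraph V) : Set V :=
  {v ∈ supSet G | ∃ u ∈ supSet G, G.Adj v u}

/-- `S⁻(G) = sup(G) \ S⁺(G)`. -/
def supMinus (G : SimpleGraph V) : Set V := supSet G \ supPlus G

/-- The set of vertices covered by a set of edges. -/
def edgeVerts (E : Set (Sym2 V)) : Set V := {v | ∃ e ∈ E, v ∈ e}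

/-- Conditions (i)-(ii) (minimum degree two case) for a matching `M`:
(i) for every `v ∈ V(M)`, its partner `M_p v` is the unique neighbor of `v` in `V(M)`;
(ii) distinct `u, v ∈ V(M)` with a common neighbor force a vertex whose neighborhood is
exactly `{M_p u, M_p v}`. -/
def MatchingCond (G : SimpleGraph V) (M : G.Subgraph) : Prop :=
  (∀ v ∈ M.verts, ∀ w, M.Adj v w → ∀ u ∈ M.verts, G.Adj v u → u = w) ∧
  (∀ u v : V, u ∈ M.verts → v ∈ M.verts → u ≠ v →
    (∃ w, G.Adj u w ∧ G.Adj v w) →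
    ∀ u' v' : V, M.Adj u u' → M.Adj v v' → ∃ x : V, G.neighborSet x = {u', v'})

/-- The matching `M` is partitioned as `M = M⁺ ∪ M⁻ ∪ M*` satisfying conditions (i)-(iv)
of the main theorem:
(i) `M⁺` is a perfect matching of the subgraph induced by `S⁺(G)`;
(ii) `S⁻(G) ⊆ V(M⁻)` and every edge of `M⁻` joins a vertex of `S⁻(G)` with a vertex of
`V(G) \ sup(G)`;
(iii) for `v ∈ S⁻(G) ∪ V(M*)`, the partner `M_p v` is the unique neighbor of `v` in `V(M)`;
(iv) for distinct `u, v ∈ S⁻(G) ∪ V(M*)` with a common neighbor, some vertex has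
neighborhood exactly `{M_p u, M_p v}`. -/
def PartitionCond (G : SimpleGraph V) (M : G.Subgraph) (Mp Mm Ms : Set (Sym2 V)) : Prop :=
  Mp ∪ Mm ∪ Ms = M.edgeSet ∧
  Disjoint Mp Mm ∧ Disjoint Mp Ms ∧ Disjoint Mm Ms ∧
  -- (i)
  (∀ u v : V, s(u, v) ∈ Mp → u ∈ supPlus G) ∧
  supPlus G ⊆ edgeVerts Mp ∧
  -- (ii)
  supMinus G ⊆ edgeVerts Mm ∧
  (∀ u v : V, s(u, v) ∈ Mm →
    (u ∈ supMinus G ∧ v ∉ supSet G) ∨ (v ∈ supMinus G ∧ u ∉ supSet G)) ∧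
  -- (iii)
  (∀ v ∈ supMinus G ∪ edgeVerts Ms, ∀ w, M.Adj v w → ∀ u ∈ M.verts, G.Adj v u → u = w) ∧
  -- (iv)
  (∀ u v : V, u ∈ supMinus G ∪ edgeVerts Ms → v ∈ supMinus G ∪ edgeVerts Ms → u ≠ v →
    (∃ w, G.Adj u w ∧ G.Adj v w) →
    ∀ u' v' : V, M.Adj u u' → M.Adj v v' → ∃ x : V, G.neighborSet x = {u', v'})

/-- The graph with vertices `u, v, w_1, …, w_n` (here `u = Sum.inr 0`, `v = Sum.inr 1`,
`w_i = Sum.inl i`) and edges `uv` and `uw_i, vw_i` for all `i`: `n` triangles sharing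
the common edge `uv`. -/
def kGraph (n : ℕ) : SimpleGraph (Fin n ⊕ Fin 2) :=
  SimpleGraph.fromRel (fun a b => ¬(a.isLeft = true ∧ b.isLeft = true))

/-- `G` belongs to the family `𝒦` of graphs consisting of triangles sharing a common edge. -/
def InK (G : SimpleGraph V) : Prop := ∃ n : ℕ, 1 ≤ n ∧ Nonempty (G ≃g kGraph n)

/-- `G` is a 6-cycle. -/
def IsC6 (G : SimpleGraph V) : Prop := Nonempty (G ≃g SimpleGraph.cycleGraph 6)

/-- `a, b, c, d, e, f` (in this cyclic order) form an induced 6-cycle in `G`. -/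
def IsInducedC6 (G : SimpleGraph V) (a b c d e f : V) : Prop :=
  List.Pairwise (· ≠ ·) [a, b, c, d, e, f] ∧
  G.Adj a b ∧ G.Adj b c ∧ G.Adj c d ∧ G.Adj d e ∧ G.Adj e f ∧ G.Adj f a ∧
  ¬G.Adj a c ∧ ¬G.Adj a d ∧ ¬G.Adj a e ∧
  ¬G.Adj b d ∧ ¬G.Adj b e ∧ ¬G.Adj b f ∧
  ¬G.Adj c e ∧ ¬G.Adj c f ∧ ¬G.Adj d f

/-- `d₂(G)`: the set of vertices of degree two. -/
def d2 (G : SimpleGraph V) : Set V := {v | (G.neighborSet v).ncard = 2}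

/-- `𝓜(G)`: the set of edges `uv` such that there are `x ∈ N(u) ∩ d₂(G)` and
`y ∈ N(v) ∩ d₂(G)` so that the edges `xu, uv, vy` lie on a common induced 6-cycle of `G`. -/
def mSet (G : SimpleGraph V) : Set (Sym2 V) :=
  {e | ∃ u v x y w t : V, e = s(u, v) ∧
    x ∈ G.neighborSet u ∩ d2 G ∧ y ∈ G.neighborSet v ∩ d2 G ∧
    IsInducedC6 G x u v y w t}


section Aux

variable {G : SimpleGraph V} {M : G.Subgraph}

lemma mem_edge_exists' {e : Sym2 V} {v : V} (he : e ∈ M.edgeSet) (hv : v ∈ e) :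
    ∃ u, M.Adj v u ∧ e = s(v, u) := by
  induction e with
  | _ a b =>
    rw [Sym2.mem_iff] at hv
    rcases hv with rfl | rfl
    · exact ⟨b, he, rfl⟩
    · exact ⟨a, (Subgraph.mem_edgeSet.mp he).symm, Sym2.eq_swap⟩

lemma partner_exists (hM : M.IsMatching) :
    ∃ p : V → V, (∀ v ∈ M.verts, M.Adj v (p v)) ∧ ∀ v w, M.Adj v w → p v = w := by
  classical
  refine ⟨fun v => if hv : v ∈ M.verts then (hM hv).choose else v, fun v hv => ?_, fun v w hvw => ?_⟩
  · simp only [dif_pos hv]; exact (hM hv).choose_spec.1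
  · have hv := M.edge_vert hvw
    simp only [dif_pos hv]
    exact ((hM hv).choose_spec.2 w hvw).symm

lemma touches' (hM : IsMaximalMatching G M) {x y : V} (hxy : G.Adj x y) :
    x ∈ M.verts ∨ y ∈ M.verts := by
  by_contra hc
  push_neg at hc
  obtain ⟨hx, hy⟩ := hc
  have hdisj : Disjoint M.support (G.subgraphOfAdj hxy).support := by
    rw [hM.1.support_eq_verts, G.support_subgraphOfAdj]
    rw [Set.disjoint_iff]
    rintro z ⟨hz1, hz2⟩
    rcases hz2 with rfl | rfl
    · exact hx hz1
    · exact hy hz1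
  have hsup : (M ⊔ G.subgraphOfAdj hxy).IsMatching :=
    hM.1.sup (Subgraph.IsMatching.subgraphOfAdj hxy) hdisj
  have heq := hM.2 _ hsup (Subgraph.edgeSet_mono le_sup_left)
  have : s(x, y) ∈ (M ⊔ G.subgraphOfAdj hxy).edgeSet := by
    rw [Subgraph.edgeSet_sup]
    right
    simp
  rw [← heq] at this
  exact hx (M.edge_vert (Subgraph.mem_edgeSet.mp this))

lemma exists_maximal' [Fintype V] (G : SimpleGraph V) :
    ∃ M : G.Subgraph, IsMaximalMatching G M := by
  classical
  set S : Set ℕ := {n | ∃ M : G.Subgraph, M.IsMatching ∧ M.edgeSet.ncard = n} with hS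
  have hne : S.Nonempty := ⟨(⊥ : G.Subgraph).edgeSet.ncard, ⊥, by
    intro v hv; exact absurd hv (by simp), rfl⟩
  have hbdd : BddAbove S := by
    refine ⟨Fintype.card (Sym2 V), ?_⟩
    rintro n ⟨M, _, rfl⟩
    show M.edgeSet.ncard ≤ _
    calc M.edgeSet.ncard ≤ Set.univ.ncard :=
          Set.ncard_le_ncard (Set.subset_univ M.edgeSet) Set.finite_univ
      _ = Fintype.card (Sym2 V) := by rw [Set.ncard_univ, Nat.card_eq_fintype_card]
  obtain ⟨M, hM, hcard⟩ := Nat.sSup_mem hne hbdd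
  refine ⟨M, hM, fun M' hM' hsub => ?_⟩
  have hle : M'.edgeSet.ncard ≤ M.edgeSet.ncard := by
    rw [hcard]; exact le_csSup hbdd ⟨M', hM', rfl⟩
  exact Set.eq_of_subset_of_ncard_le hsub hle (Set.toFinite _)

lemma verts_ncard' [Fintype V] (hM : M.IsMatching) :
    M.verts.ncard = 2 * M.edgeSet.ncard := by
  classical
  set f : V → Sym2 V := fun v =>
    if h : v ∈ M.verts then s(v, (hM h).choose) else (Sym2.diag v) with hf
  have hadj : ∀ {v : V} (h : v ∈ M.verts), M.Adj v ((hM h).choose) := fun h => (hM h).choose_spec.1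
  have hchoose : ∀ {v w : V} (h : v ∈ M.verts), M.Adj v w → (hM h).choose = w :=
    fun h hadj' => ((hM h).choose_spec.2 _ hadj').symm.trans rfl
  have hfe : ∀ {v w : V}, M.Adj v w → f v = s(v, w) := by
    intro v w hvw
    have hv : v ∈ M.verts := M.edge_vert hvw
    simp only [hf, dif_pos hv, hchoose hv hvw]
  have hmem : ∀ v ∈ M.verts.toFinset, f v ∈ M.edgeSet.toFinset := by
    intro v hv
    rw [Set.mem_toFinset] at hv ⊢
    rw [hfe (hadj hv)]
    exact Subgraph.mem_edgeSet.mpr (hadj hv)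
  have hsum := Finset.card_eq_sum_card_fiberwise hmem
  have hfiber : ∀ e ∈ M.edgeSet.toFinset,
      (M.verts.toFinset.filter (fun v => f v = e)).card = 2 := by
    intro e he
    rw [Set.mem_toFinset] at he
    induction e with
    | _ a b =>
      have hab : M.Adj a b := Subgraph.mem_edgeSet.mp he
      have hne : a ≠ b := (M.adj_sub hab).ne
      have : (M.verts.toFinset.filter (fun v => f v = s(a, b))) = {a, b} := by
        ext v
        simp only [Finset.mem_filter, Set.mem_toFinset, Finset.mem_insert, Finset.mem_singleton]
        constructor
        · rintro ⟨hv, hfv⟩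
          have : v ∈ s(a, b) := by
            rw [← hfv, hfe (hadj hv)]
            exact Sym2.mem_mk_left _ _
          rwa [Sym2.mem_iff] at this
        · rintro (rfl | rfl)
          · exact ⟨M.edge_vert hab, hfe hab⟩
          · exact ⟨M.edge_vert hab.symm, by rw [hfe hab.symm, Sym2.eq_swap]⟩
      rw [this, Finset.card_pair hne]
  rw [Finset.sum_congr rfl hfiber, Finset.sum_const, smul_eq_mul, mul_comm] at hsum
  rw [Set.ncard_eq_toFinset_card', Set.ncard_eq_toFinset_card', hsum]

lemma verts_TDS (h : NoIsolated G) (hM : IsMaximalMatching G M) :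
    IsTotalDomSet G M.verts := by
  intro v
  by_cases hv : v ∈ M.verts
  · obtain ⟨w, hw, -⟩ := hM.1 hv
    exact ⟨w, M.edge_vert hw.symm, M.adj_sub hw⟩
  · obtain ⟨u, hu⟩ := h v
    exact ⟨u, (touches' hM hu).resolve_left hv, hu⟩

lemma sup_subset_TDS {T : Set V} (hT : IsTotalDomSet G T) : supSet G ⊆ T := by
  rintro v ⟨u, hadj, hdeg⟩
  obtain ⟨t, ht, hadj'⟩ := hT u
  obtain ⟨a, ha⟩ := Set.ncard_eq_one.mp hdeg
  have h1 : v = a := by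
    have : v ∈ G.neighborSet u := hadj.symm
    rwa [ha, Set.mem_singleton_iff] at this
  have h2 : t = a := by
    have : t ∈ G.neighborSet u := hadj'
    rwa [ha, Set.mem_singleton_iff] at this
  rw [h1, ← h2]
  exact ht

lemma gammaT_le_two_muStar [Fintype V] (h : NoIsolated G) :
    gammaT G ≤ 2 * muStar G := by
  have hμne : {n | ∃ M : G.Subgraph, IsMaximalMatching G M ∧ M.edgeSet.ncard = n}.Nonempty :=
    (exists_maximal' G).elim fun M hM => ⟨_, M, hM, rfl⟩
  obtain ⟨M, hM, hcard⟩ := Nat.sInf_mem hμne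
  have hle : gammaT G ≤ M.verts.ncard := Nat.sInf_le ⟨M.verts, verts_TDS h hM, rfl⟩
  rwa [verts_ncard' hM.1, hcard] at hle

lemma outside_helper (h : NoIsolated G) (hM : IsMaximalMatching G M) {z t : V}
    (hz : z ∉ M.verts) (ht : t ∉ supSet G) :
    ∃ y, G.Adj z y ∧ y ∈ M.verts ∧ y ≠ t := by
  by_cases hy : ∃ y, G.Adj z y ∧ y ≠ t
  · obtain ⟨y, hadj, hne⟩ := hy
    exact ⟨y, hadj, (touches' hM hadj).resolve_left hz, hne⟩
  · push_neg at hy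
    obtain ⟨y₀, hy₀⟩ := h z
    have hyt := hy y₀ hy₀
    subst hyt
    have hNz : G.neighborSet z = {y₀} := by
      ext y
      simp only [mem_neighborSet, Set.mem_singleton_iff]
      exact ⟨fun hadj => hy y hadj, fun hyy => hyy ▸ hy₀⟩
    exact absurd ⟨z, hy₀.symm, by rw [hNz]; exact Set.ncard_singleton _⟩ ht

lemma two_mul_le_of_partition [Fintype V] (h : NoIsolated G) (hM : IsMaximalMatching G M)
    {Mp Mm Ms : Set (Sym2 V)} (hP : PartitionCond G M Mp Mm Ms)
    {T : Set V} (hT : IsTotalDomSet G T) : M.verts.ncard ≤ T.ncard := by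
  classical
  obtain ⟨hunion, -, -, -, hMpPlus, -, -, hMmEdge, hiii, hiv⟩ := hP
  have hsupT : supSet G ⊆ T := sup_subset_TDS hT
  choose d hdT hdAdj using hT
  obtain ⟨p, hpAdj, hpUniq⟩ := partner_exists hM.1
  have hMsSub : Ms ⊆ M.edgeSet := by
    rw [← hunion]; exact fun e he => Or.inr he
  -- F1 : uncovered vertices have partner in the "A" set
  have hF1 : ∀ x ∈ M.verts, x ∉ T → p x ∈ supMinus G ∪ edgeVerts Ms := by
    intro x hx hxT
    have he : s(x, p x) ∈ M.edgeSet := Subgraph.mem_edgeSet.mpr (hpAdj x hx)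
    rw [← hunion] at he
    rcases he with (he | he) | he
    · exact absurd (hsupT (hMpPlus x (p x) he).1) hxT
    · rcases hMmEdge x (p x) he with ⟨hx1, -⟩ | ⟨h1, -⟩
      · exact absurd (hsupT hx1.1) hxT
      · exact Or.inl h1
    · exact Or.inr ⟨s(x, p x), he, Sym2.mem_mk_right _ _⟩
  have hkey : ∀ x ∈ M.verts, x ∉ T → d (p x) ∈ M.verts → d (p x) = x := by
    intro x hx hxT hdv
    have hinv : M.Adj (p x) x := (hpAdj x hx).symm
    exact hiii (p x) (hF1 x hx hxT) x hinv (d (p x)) hdv (hdAdj (p x))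
  have hmaps : ∀ a ∈ M.verts, (if a ∈ T then a else d (p a)) ∈ T := by
    intro a _
    by_cases ha : a ∈ T
    · simpa [ha] using ha
    · simpa [ha] using hdT (p a)
  have hinj : Set.InjOn (fun a => if a ∈ T then a else d (p a)) M.verts := by
    intro x₁ hx₁ x₂ hx₂ heq
    simp only at heq
    by_cases h₁ : x₁ ∈ T <;> by_cases h₂ : x₂ ∈ T
    · rwa [if_pos h₁, if_pos h₂] at heq
    · rw [if_pos h₁, if_neg h₂] at heq
      have := hkey x₂ hx₂ h₂ (heq ▸ hx₁)
      rw [heq, this]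
    · rw [if_neg h₁, if_pos h₂] at heq
      have := hkey x₁ hx₁ h₁ (heq.symm ▸ hx₂)
      rw [← heq, this]
    · rw [if_neg h₁, if_neg h₂] at heq
      by_cases hw : d (p x₁) ∈ M.verts
      · have e₁ := hkey x₁ hx₁ h₁ hw
        have e₂ := hkey x₂ hx₂ h₂ (heq ▸ hw)
        rw [← e₁, heq, e₂]
      · by_contra hne
        have hinv₁ : p (p x₁) = x₁ := hpUniq _ _ (hpAdj x₁ hx₁).symm
        have hinv₂ : p (p x₂) = x₂ := hpUniq _ _ (hpAdj x₂ hx₂).symm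
        have hpne : p x₁ ≠ p x₂ := by
          intro hpe
          exact hne (by rw [← hinv₁, hpe, hinv₂])
        have hcomm : ∃ w₀, G.Adj (p x₁) w₀ ∧ G.Adj (p x₂) w₀ :=
          ⟨d (p x₁), hdAdj (p x₁), heq ▸ hdAdj (p x₂)⟩
        obtain ⟨z, hz⟩ := hiv (p x₁) (p x₂) (hF1 x₁ hx₁ h₁) (hF1 x₂ hx₂ h₂) hpne hcomm
          x₁ x₂ (hpAdj x₁ hx₁).symm (hpAdj x₂ hx₂).symm
        have hdz : d z ∈ G.neighborSet z := hdAdj z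
        rw [hz] at hdz
        rcases hdz with hdz | hdz
        · exact h₁ (hdz ▸ hdT z)
        · exact h₂ (hdz ▸ hdT z)
  calc M.verts.ncard ≤ T.ncard :=
    Set.ncard_le_ncard_of_injOn _ hmaps hinj (Set.toFinite T)

end Aux

/-- Let `G` be a finite graph with no isolated vertices and `1 ≤ δ(G) ≤ 2`. Then
`γ_t(G) = 2 μ*(G)` iff `G` has a maximal matching `M = M⁺ ∪ M⁻ ∪ M*` satisfying
conditions (i)-(iv). -/
theorem statement10 [Fintype V] (G : SimpleGraph V)
    (h : NoIsolated G) (h1 : 1 ≤ minDeg G) (h2 : minDeg G ≤ 2) :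
    gammaT G = 2 * muStar G ↔
      ∃ (M : G.Subgraph) (Mp Mm Ms : Set (Sym2 V)),
        IsMaximalMatching G M ∧ PartitionCond G M Mp Mm Ms := by
  classical
  constructor
  · intro heq
    have hμne : {n | ∃ M : G.Subgraph, IsMaximalMatching G M ∧ M.edgeSet.ncard = n}.Nonempty :=
      (exists_maximal' G).elim fun M hM => ⟨_, M, hM, rfl⟩
    obtain ⟨M, hMmax, hMcard⟩ := Nat.sInf_mem hμne
    have hVTDS : IsTotalDomSet G M.verts := verts_TDS h hMmax
    have hsupM : supSet G ⊆ M.verts := sup_subset_TDS hVTDS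
    have hvcard : M.verts.ncard = gammaT G := by
      rw [verts_ncard' hMmax.1, hMcard]
      exact heq.symm
    have hsmall : ∀ T : Set V, IsTotalDomSet G T → T.ncard < M.verts.ncard → False := by
      intro T hT hlt
      have : gammaT G ≤ T.ncard := Nat.sInf_le ⟨T, hT, rfl⟩
      omega
    obtain ⟨p, hpAdj, hpUniq⟩ := partner_exists hMmax.1
    -- K1 : the partner of a vertex of S⁺ is in S⁺
    have hK1 : ∀ s ∈ supPlus G, ∀ t, M.Adj s t → t ∈ supPlus G := by
      rintro s ⟨hssup, s', hs'sup, hss'⟩ t hst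
      by_contra htplus
      have htsup : t ∉ supSet G := fun htsup => htplus ⟨htsup, s, hssup, (M.adj_sub hst).symm⟩
      have htv : t ∈ M.verts := M.edge_vert hst.symm
      have hTDS : IsTotalDomSet G (M.verts \ {t}) := by
        intro z
        by_cases hzv : z ∈ M.verts
        · by_cases hzs : z = s
          · subst hzs
            exact ⟨s', ⟨hsupM hs'sup, fun hc => htsup (hc ▸ hs'sup)⟩, hss'⟩
          · refine ⟨p z, ⟨M.edge_vert (hpAdj z hzv).symm, ?_⟩, M.adj_sub (hpAdj z hzv)⟩
            intro hc
            rw [Set.mem_singleton_iff] at hc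
            exact hzs ((hMmax.1 htv).unique (hc ▸ hpAdj z hzv).symm hst.symm)
        · obtain ⟨y, hy1, hy2, hy3⟩ := outside_helper h hMmax hzv htsup
          exact ⟨y, ⟨hy2, hy3⟩, hy1⟩
      exact hsmall _ hTDS (Set.ncard_diff_singleton_lt_of_mem htv (Set.toFinite _))
    -- K2 : if the partner is not a support vertex, it is the unique matched neighbor
    have hK2 : ∀ v w, M.Adj v w → w ∉ supSet G → ∀ u ∈ M.verts, G.Adj v u → u = w := by
      intro v w hvw hwsup u hu hadj
      by_contra hne
      have hwv : w ∈ M.verts := M.edge_vert hvw.symm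
      have hTDS : IsTotalDomSet G (M.verts \ {w}) := by
        intro z
        by_cases hzv : z ∈ M.verts
        · by_cases hzs : z = v
          · subst hzs
            exact ⟨u, ⟨hu, fun hc => hne (by rwa [Set.mem_singleton_iff] at hc)⟩, hadj⟩
          · refine ⟨p z, ⟨M.edge_vert (hpAdj z hzv).symm, ?_⟩, M.adj_sub (hpAdj z hzv)⟩
            intro hc
            rw [Set.mem_singleton_iff] at hc
            exact hzs ((hMmax.1 hwv).unique (hc ▸ hpAdj z hzv).symm hvw.symm)
        · obtain ⟨y, hy1, hy2, hy3⟩ := outside_helper h hMmax hzv hwsup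
          exact ⟨y, ⟨hy2, hy3⟩, hy1⟩
      exact hsmall _ hTDS (Set.ncard_diff_singleton_lt_of_mem hwv (Set.toFinite _))
    -- the partition
    set Mp : Set (Sym2 V) := {e | e ∈ M.edgeSet ∧ ∀ x ∈ e, x ∈ supPlus G} with hMpdef
    set Mm : Set (Sym2 V) := {e | e ∈ M.edgeSet ∧ ∃ x ∈ e, x ∈ supMinus G} with hMmdef
    set Ms : Set (Sym2 V) := M.edgeSet \ (Mp ∪ Mm) with hMsdef
    have hpartnb : ∀ x ∈ supMinus G ∪ edgeVerts Ms, ∀ w, M.Adj x w → w ∉ supSet G := by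
      rintro x (hx | hx) w hxw hwsup
      · exact hx.2 ⟨hx.1, w, hwsup, M.adj_sub hxw⟩
      · obtain ⟨e, heMs, hxe⟩ := hx
        obtain ⟨u₀, hadj₀, rfl⟩ := mem_edge_exists' heMs.1 hxe
        have hu₀ : w = u₀ := ((hMmax.1 (M.edge_vert hadj₀)).unique hadj₀ hxw).symm
        subst hu₀
        by_cases hwp : w ∈ supPlus G
        · have hxp : x ∈ supPlus G := hK1 w hwp x hxw.symm
          refine heMs.2 (Or.inl ⟨heMs.1, fun y hy => ?_⟩)
          rcases Sym2.mem_iff.mp hy with rfl | rfl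
          · exact hxp
          · exact hwp
        · exact heMs.2 (Or.inr ⟨heMs.1, w, Sym2.mem_mk_right _ _, hwsup, hwp⟩)
    have huniq : ∀ v ∈ supMinus G ∪ edgeVerts Ms, ∀ w, M.Adj v w →
        ∀ u ∈ M.verts, G.Adj v u → u = w :=
      fun v hv w hvw => hK2 v w hvw (hpartnb v hv w hvw)
    -- K3 : condition (iv)
    have hK3 : ∀ u v : V, u ∈ supMinus G ∪ edgeVerts Ms → v ∈ supMinus G ∪ edgeVerts Ms →
        u ≠ v → (∃ w, G.Adj u w ∧ G.Adj v w) →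
        ∀ u' v' : V, M.Adj u u' → M.Adj v v' → ∃ x : V, G.neighborSet x = {u', v'} := by
      intro u v hu hv hne hcomm u' v' huu' hvv'
      by_contra hwit
      push_neg at hwit
      obtain ⟨w, hwu, hwv⟩ := hcomm
      have hu'sup : u' ∉ supSet G := hpartnb u hu u' huu'
      have hv'sup : v' ∉ supSet G := hpartnb v hv v' hvv'
      have hu'V : u' ∈ M.verts := M.edge_vert huu'.symm
      have hv'V : v' ∈ M.verts := M.edge_vert hvv'.symm
      have huV : u ∈ M.verts := M.edge_vert huu'
      have hvV : v ∈ M.verts := M.edge_vert hvv'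
      have huv' : u' ≠ v' := by
        intro hc
        exact hne ((hMmax.1 hu'V).unique huu'.symm (hc ▸ hvv'.symm))
      have hwV : w ∉ M.verts := by
        intro hwV
        have h1 : w = u' := huniq u hu u' huu' w hwV hwu
        have h2 : w = v' := huniq v hv v' hvv' w hwV hwv
        exact huv' (h1 ▸ h2)
      have hneuu' : u ≠ u' := (M.adj_sub huu').ne
      have hnevv' : v ≠ v' := (M.adj_sub hvv').ne
      have hTDS : IsTotalDomSet G (insert w (M.verts \ {u', v'})) := by
        intro z
        by_cases hzu : z = u
        · exact ⟨w, Set.mem_insert _ _, hzu ▸ hwu⟩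
        by_cases hzv2 : z = v
        · exact ⟨w, Set.mem_insert _ _, hzv2 ▸ hwv⟩
        by_cases hzw : z = w
        · subst hzw
          by_cases hy : ∃ y, G.Adj z y ∧ y ≠ u' ∧ y ≠ v'
          · obtain ⟨y, hadj, hy1, hy2⟩ := hy
            have hyV : y ∈ M.verts := (touches' hMmax hadj).resolve_left hwV
            refine ⟨y, Set.mem_insert_of_mem _ ⟨hyV, ?_⟩, hadj⟩
            simp [hy1, hy2]
          · push_neg at hy
            have hu_eq : u = v' := hy u hwu.symm hneuu'
            have hv_eq : v = u' := by
              by_cases hvu' : v = u'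
              · exact hvu'
              · exact absurd (hy v hwv.symm hvu') hnevv'
            refine absurd (Set.ext fun y => ?_) (hwit z)
            simp only [mem_neighborSet, Set.mem_insert_iff, Set.mem_singleton_iff]
            constructor
            · intro hyw
              by_cases h1 : y = u'
              · exact Or.inl h1
              · exact Or.inr (hy y hyw h1)
            · rintro (rfl | rfl)
              · exact hv_eq ▸ hwv.symm
              · exact hu_eq ▸ hwu.symm
        by_cases hzV : z ∈ M.verts
        · have hpz := hpAdj z hzV
          by_cases h1 : p z = u'
          · exact absurd ((hMmax.1 hu'V).unique (h1 ▸ hpz).symm huu'.symm) hzu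
          by_cases h2 : p z = v'
          · exact absurd ((hMmax.1 hv'V).unique (h2 ▸ hpz).symm hvv'.symm) hzv2
          · refine ⟨p z, Set.mem_insert_of_mem _ ⟨M.edge_vert hpz.symm, ?_⟩, M.adj_sub hpz⟩
            simp [h1, h2]
        · by_cases hy : ∃ y, G.Adj z y ∧ y ≠ u' ∧ y ≠ v'
          · obtain ⟨y, hadj, hy1, hy2⟩ := hy
            have hyV : y ∈ M.verts := (touches' hMmax hadj).resolve_left hzV
            refine ⟨y, Set.mem_insert_of_mem _ ⟨hyV, ?_⟩, hadj⟩
            simp [hy1, hy2]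
          · push_neg at hy
            obtain ⟨y₀, hy₀⟩ := h z
            by_cases ha : G.Adj z u' <;> by_cases hb : G.Adj z v'
            · refine absurd (Set.ext fun y => ?_) (hwit z)
              simp only [mem_neighborSet, Set.mem_insert_iff, Set.mem_singleton_iff]
              constructor
              · intro hyw
                by_cases h1 : y = u'
                · exact Or.inl h1
                · exact Or.inr (hy y hyw h1)
              · rintro (rfl | rfl)
                · exact ha
                · exact hb
            · have hNz : G.neighborSet z = {u'} := by
                ext y
                simp only [mem_neighborSet, Set.mem_singleton_iff]
                constructor
                · intro hyw
                  by_cases h1 : y = u'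
                  · exact h1
                  · exact absurd ((hy y hyw h1) ▸ hyw) hb
                · rintro rfl; exact ha
              exact absurd ⟨z, ha.symm, by rw [hNz]; exact Set.ncard_singleton _⟩ hu'sup
            · have hNz : G.neighborSet z = {v'} := by
                ext y
                simp only [mem_neighborSet, Set.mem_singleton_iff]
                constructor
                · intro hyw
                  by_cases h1 : y = u'
                  · exact absurd (h1 ▸ hyw) ha
                  · exact hy y hyw h1
                · rintro rfl; exact hb
              exact absurd ⟨z, hb.symm, by rw [hNz]; exact Set.ncard_singleton _⟩ hv'sup
            · by_cases h1 : y₀ = u'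
              · exact absurd (h1 ▸ hy₀) ha
              · exact absurd ((hy y₀ hy₀ h1) ▸ hy₀) hb
      have hwT : w ∉ M.verts \ {u', v'} := fun hc => hwV hc.1
      have hsub : {u', v'} ⊆ M.verts := by
        rintro y (rfl | rfl)
        · exact hu'V
        · exact hv'V
      have h2le : 2 ≤ M.verts.ncard := by
        rw [← Set.ncard_pair huv']
        exact Set.ncard_le_ncard hsub (Set.toFinite _)
      have hcard : (insert w (M.verts \ {u', v'})).ncard = M.verts.ncard - 1 := by
        rw [Set.ncard_insert_of_notMem hwT (Set.toFinite _),
          Set.ncard_diff hsub (Set.toFinite _), Set.ncard_pair huv']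
        omega
      exact hsmall _ hTDS (by omega)
    -- assemble
    refine ⟨M, Mp, Mm, Ms, hMmax, ?_, ?_, ?_, ?_, ?_, ?_, ?_, ?_, huniq, hK3⟩
    · -- union
      apply Set.ext
      intro e
      constructor
      · rintro ((he | he) | he)
        · exact he.1
        · exact he.1
        · exact he.1
      · intro heE
        by_cases he' : e ∈ Mp ∪ Mm
        · exact Or.inl he'
        · exact Or.inr ⟨heE, he'⟩
    · -- Disjoint Mp Mm
      rw [Set.disjoint_left]
      rintro e ⟨-, hall⟩ ⟨-, x, hxe, hxm⟩
      exact hxm.2 (hall x hxe)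
    · -- Disjoint Mp Ms
      rw [Set.disjoint_left]
      intro e he heMs
      exact heMs.2 (Or.inl he)
    · -- Disjoint Mm Ms
      rw [Set.disjoint_left]
      intro e he heMs
      exact heMs.2 (Or.inr he)
    · -- (i) part 1
      intro u v he
      exact he.2 u (Sym2.mem_mk_left _ _)
    · -- (i) part 2
      intro s hs
      have hsV : s ∈ M.verts := hsupM hs.1
      have hpm : M.Adj s (p s) := hpAdj s hsV
      have htp : p s ∈ supPlus G := hK1 s hs _ hpm
      refine ⟨s(s, p s), ⟨Subgraph.mem_edgeSet.mpr hpm, fun x hx => ?_⟩, Sym2.mem_mk_left _ _⟩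
      rcases Sym2.mem_iff.mp hx with rfl | rfl
      · exact hs
      · exact htp
    · -- (ii) part 1
      intro s hs
      have hsV : s ∈ M.verts := hsupM hs.1
      exact ⟨s(s, p s), ⟨Subgraph.mem_edgeSet.mpr (hpAdj s hsV), s, Sym2.mem_mk_left _ _, hs⟩,
        Sym2.mem_mk_left _ _⟩
    · -- (ii) part 2
      rintro u v ⟨heE, x, hxe, hxm⟩
      have hadj : M.Adj u v := Subgraph.mem_edgeSet.mp heE
      rcases Sym2.mem_iff.mp hxe with rfl | rfl
      · exact Or.inl ⟨hxm, fun hvsup => hxm.2 ⟨hxm.1, _, hvsup, M.adj_sub hadj⟩⟩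
      · exact Or.inr ⟨hxm, fun husup => hxm.2 ⟨hxm.1, _, husup, (M.adj_sub hadj).symm⟩⟩
  · rintro ⟨M, Mp, Mm, Ms, hMmax, hP⟩
    have hle1 : gammaT G ≤ 2 * muStar G := gammaT_le_two_muStar h
    have hle2 : muStar G ≤ M.edgeSet.ncard := Nat.sInf_le ⟨M, hMmax, rfl⟩
    have hTne : {n | ∃ S : Set V, IsTotalDomSet G S ∧ S.ncard = n}.Nonempty :=
      ⟨_, Set.univ, fun v => (h v).imp fun u hu => ⟨trivial, hu⟩, rfl⟩
    obtain ⟨T, hT, hTc⟩ := Nat.sInf_mem hTne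
    have hle3 : 2 * M.edgeSet.ncard ≤ gammaT G := by
      calc 2 * M.edgeSet.ncard = M.verts.ncard := (verts_ncard' hMmax.1).symm
        _ ≤ T.ncard := two_mul_le_of_partition h hMmax hP hT
        _ = gammaT G := hTc
    omega

end TotalDomMM
end

section
/- Let G be a finite simple graph with minimum degree δ(G) = 2. Then γ_t(G) = 2μ*(G) if and only if there exists a maximal matching M in G satisfying: (i) for every vertex v ∈ V(M), the partner M_p(v) is the unique neighbor of v among the vertices of V(M); (ii) for every two distinct vertices u, v ∈ V(M), if u and v have a common neighbor then there exists a vertex whose neighborhood is exactly {M_p(u), M_p(v)}. -/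
open SimpleGraph

namespace TotalDomMM

variable {V : Type*}

set_option linter.unusedSectionVars false
section Helpers

variable [Fintype V] {G : SimpleGraph V} {M : G.Subgraph}

lemma two_le_deg (h2 : minDeg G = 2) (v : V) : 2 ≤ (G.neighborSet v).ncard :=
  h2 ▸ Nat.sInf_le ⟨v, rfl⟩

/-- no two vertices outside a maximal matching are adjacent -/
lemma outside_not_adj (hM : IsMaximalMatching G M) {v u : V}
    (hv : v ∉ M.verts) (hu : u ∉ M.verts) (h : G.Adj v u) : False := by
  classical
  have hvu : v ≠ u := h.ne
  set M' : G.Subgraph := M ⊔ G.subgraphOfAdj h with hM'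
  have hmatch : M'.IsMatching := by
    intro x hx
    rw [hM', Subgraph.verts_sup, Set.mem_union] at hx
    rcases hx with hx | hx
    · obtain ⟨w, hw, hwu⟩ := hM.1 hx
      refine ⟨w, Or.inl hw, ?_⟩
      rintro y (hy | hy)
      · exact hwu y hy
      · simp only [subgraphOfAdj_adj, Sym2.eq_iff] at hy
        rcases hy with ⟨rfl, rfl⟩ | ⟨rfl, rfl⟩ <;> [exact absurd hx hv; exact absurd hx hu]
    · simp only [subgraphOfAdj_verts, Set.mem_insert_iff, Set.mem_singleton_iff] at hx
      rcases hx with rfl | rfl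
      · refine ⟨u, Or.inr (by simp), ?_⟩
        rintro y (hy | hy)
        · exact absurd hy.fst_mem hv
        · simp only [subgraphOfAdj_adj, Sym2.eq_iff] at hy
          obtain ⟨-, h2⟩ | ⟨h1, h2⟩ := hy
          · exact h2.symm
          · exact absurd h2.symm hvu
      · refine ⟨v, Or.inr (by simp [Sym2.eq_swap]), ?_⟩
        rintro y (hy | hy)
        · exact absurd hy.fst_mem hu
        · simp only [subgraphOfAdj_adj, Sym2.eq_iff] at hy
          obtain ⟨h1, h2⟩ | ⟨h1, -⟩ := hy
          · exact absurd h1 hvu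
          · exact h1.symm
  have hsub : M.edgeSet ⊆ M'.edgeSet := Subgraph.edgeSet_mono le_sup_left
  have heq := hM.2 M' hmatch hsub
  have : s(v, u) ∈ M'.edgeSet := by
    rw [Subgraph.mem_edgeSet, hM', Subgraph.sup_adj]
    exact Or.inr (by simp)
  rw [← heq, Subgraph.mem_edgeSet] at this
  exact hv this.fst_mem

lemma verts_tds (h2 : minDeg G = 2) (hM : IsMaximalMatching G M) :
    IsTotalDomSet G M.verts := by
  intro v
  by_cases hv : v ∈ M.verts
  · obtain ⟨w, hw, -⟩ := hM.1 hv
    exact ⟨w, hw.snd_mem, hw.adj_sub⟩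
  · have : (G.neighborSet v).Nonempty := by
      rw [← Set.ncard_pos]; have := two_le_deg h2 v; omega
    obtain ⟨u, hu⟩ := this
    by_cases hum : u ∈ M.verts
    · exact ⟨u, hum, hu⟩
    · exact absurd (outside_not_adj hM hv hum hu) not_false

lemma matching_verts_ncard (hM : M.IsMatching) :
    M.verts.ncard = 2 * M.edgeSet.ncard := by
  classical
  have hVfin : M.verts.Finite := Set.toFinite _
  have hEfin : M.edgeSet.Finite := Set.toFinite _
  set p : V → V := fun a => if h : a ∈ M.verts then (hM h).exists.choose else a with hp
  have hpadj : ∀ a, a ∈ M.verts → M.Adj a (p a) := by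
    intro a ha; simp only [hp, dif_pos ha]; exact (hM ha).exists.choose_spec
  have hpu : ∀ a, a ∈ M.verts → ∀ w, M.Adj a w → w = p a := by
    intro a ha w hw; exact (hM ha).unique hw (hpadj a ha)
  set f : V → Sym2 V := fun a => s(a, p a) with hf
  rw [Set.ncard_eq_toFinset_card _ hVfin, Set.ncard_eq_toFinset_card _ hEfin]
  rw [Finset.card_eq_sum_card_fiberwise (f := f) (t := hEfin.toFinset)
    (fun x hx => by
      rw [Finset.mem_coe, Set.Finite.mem_toFinset] at hx ⊢
      exact (hpadj x hx))]
  rw [Finset.sum_congr rfl (g := fun _ => 2) ?_, Finset.sum_const, smul_eq_mul, mul_comm]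
  intro e he
  rw [Set.Finite.mem_toFinset] at he
  induction' e using Sym2.ind with a b
  rw [Subgraph.mem_edgeSet] at he
  have hab : a ≠ b := he.adj_sub.ne
  have : hVfin.toFinset.filter (fun x => f x = s(a, b)) = {a, b} := by
    ext x
    simp only [Finset.mem_filter, Set.Finite.mem_toFinset, Finset.mem_insert,
      Finset.mem_singleton, hf, Sym2.eq_iff]
    constructor
    · rintro ⟨hx, ⟨rfl, rfl⟩ | ⟨rfl, rfl⟩⟩
      · exact Or.inl rfl
      · exact Or.inr rfl
    · rintro (rfl | rfl)
      · exact ⟨he.fst_mem, Or.inl ⟨rfl, (hpu _ he.fst_mem _ he).symm⟩⟩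
      · exact ⟨he.snd_mem, Or.inr ⟨rfl, (hpu _ he.snd_mem _ he.symm).symm⟩⟩
  rw [this, Finset.card_insert_of_notMem (by simpa using hab), Finset.card_singleton]

lemma exists_maximal_matching (G : SimpleGraph V) : ∃ M : G.Subgraph, IsMaximalMatching G M := by
  classical
  set T : Set ℕ := {n | ∃ M : G.Subgraph, M.IsMatching ∧ M.edgeSet.ncard = n} with hT
  have hne : T.Nonempty := ⟨(⊥ : G.Subgraph).edgeSet.ncard, ⊥, fun v hv => by simp at hv, rfl⟩
  have hbdd : BddAbove T := by
    refine ⟨Nat.card (Sym2 V), ?_⟩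
    rintro n ⟨M, -, rfl⟩
    calc M.edgeSet.ncard ≤ (Set.univ : Set (Sym2 V)).ncard :=
        Set.ncard_le_ncard (Set.subset_univ _) (Set.toFinite _)
      _ = Nat.card (Sym2 V) := Set.ncard_univ _
  obtain ⟨M, hMm, hMc⟩ := Nat.sSup_mem hne hbdd
  refine ⟨M, hMm, fun M' hM' hsub => Set.eq_of_subset_of_ncard_le hsub ?_ (Set.toFinite _)⟩
  calc M'.edgeSet.ncard ≤ sSup T := le_csSup hbdd ⟨M', hM', rfl⟩
    _ = M.edgeSet.ncard := hMc.symm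

end Helpers


/-- Let `G` be a finite graph with `δ(G) = 2`. Then `γ_t(G) = 2 μ*(G)` iff `G` has a
maximal matching `M` such that (i) for every `v ∈ V(M)` the partner `M_p v` is the unique
neighbor of `v` in `V(M)`, and (ii) any two distinct vertices of `V(M)` with a common
neighbor force a vertex whose neighborhood is exactly the pair of their partners. -/
theorem statement11 [Fintype V] (G : SimpleGraph V) (h2 : minDeg G = 2) :
    gammaT G = 2 * muStar G ↔
      ∃ M : G.Subgraph, IsMaximalMatching G M ∧ MatchingCond G M := by

  classical
  obtain ⟨M₀, hM₀⟩ := exists_maximal_matching G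
  obtain ⟨Mmin, hMmin, hMminc⟩ :
      ∃ M : G.Subgraph, IsMaximalMatching G M ∧ M.edgeSet.ncard = muStar G :=
    Nat.sInf_mem (s := {n | ∃ M : G.Subgraph, IsMaximalMatching G M ∧ M.edgeSet.ncard = n})
      ⟨_, M₀, hM₀, rfl⟩
  have hγ_le : gammaT G ≤ 2 * muStar G := by
    calc gammaT G ≤ Mmin.verts.ncard := Nat.sInf_le ⟨_, verts_tds h2 hMmin, rfl⟩
      _ = 2 * Mmin.edgeSet.ncard := matching_verts_ncard hMmin.1
      _ = 2 * muStar G := by rw [hMminc]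
  constructor
  · intro hEq
    have hvk : Mmin.verts.ncard = 2 * muStar G := by
      rw [matching_verts_ncard hMmin.1, hMminc]
    have hi : ∀ v ∈ Mmin.verts, ∀ w, Mmin.Adj v w → ∀ u ∈ Mmin.verts, G.Adj v u → u = w := by
      intro v hv w hvw u hu hvu
      by_contra hne
      have hw : w ∈ Mmin.verts := hvw.snd_mem
      have hTDS : IsTotalDomSet G (Mmin.verts \ {w}) := by
        intro x
        by_cases hx : x ∈ Mmin.verts
        · obtain ⟨x', hx', hux'⟩ := hMmin.1 hx
          by_cases hxw : x' = w
          · subst hxw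
            have hxv : x = v := by
              obtain ⟨y, hy, huy⟩ := hMmin.1 hw
              rw [huy x hx'.symm, huy v hvw.symm]
            subst hxv
            exact ⟨u, ⟨hu, fun h => hne (by simpa using h)⟩, hvu⟩
          · exact ⟨x', ⟨hx'.snd_mem, by simpa using hxw⟩, hx'.adj_sub⟩
        · by_contra hno
          push_neg at hno
          have hsub : G.neighborSet x ⊆ {w} := by
            intro y hy
            have hym : y ∈ Mmin.verts := by
              by_contra hym
              exact outside_not_adj hMmin hx hym hy
            by_contra hyw
            exact hno y ⟨hym, hyw⟩ hy
          have hd2 := two_le_deg h2 x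
          have hle : (G.neighborSet x).ncard ≤ 1 := by
            calc (G.neighborSet x).ncard ≤ ({w} : Set V).ncard :=
                Set.ncard_le_ncard hsub (Set.toFinite _)
              _ = 1 := Set.ncard_singleton _
          omega
      have hcard : (Mmin.verts \ {w}).ncard = Mmin.verts.ncard - 1 :=
        Set.ncard_diff_singleton_of_mem hw
      have hγS : gammaT G ≤ (Mmin.verts \ {w}).ncard := Nat.sInf_le ⟨_, hTDS, rfl⟩
      have hpos : 0 < Mmin.verts.ncard := (Set.ncard_pos (Set.toFinite _)).mpr ⟨v, hv⟩
      omega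
    refine ⟨Mmin, hMmin, hi, ?_⟩
    intro u v hu hv huv hcommon u' v' huu' hvv'
    obtain ⟨w₀, hw₀u, hw₀v⟩ := hcommon
    by_contra hnx
    push_neg at hnx
    have hu' : u' ∈ Mmin.verts := huu'.snd_mem
    have hv' : v' ∈ Mmin.verts := hvv'.snd_mem
    have hne' : u' ≠ v' := by
      rintro rfl
      obtain ⟨y, hy, huy⟩ := hMmin.1 hu'
      exact huv ((huy u huu'.symm).trans (huy v hvv'.symm).symm)
    have hw₀ : w₀ ∉ Mmin.verts := by
      intro hmem
      have hA := hi u hu u' huu' w₀ hmem hw₀u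
      have hB := hi v hv v' hvv' w₀ hmem hw₀v
      exact hne' (hA.symm.trans hB)
    have hTDS : IsTotalDomSet G ((Mmin.verts \ {u', v'}) ∪ {w₀}) := by
      intro x
      by_cases hx : x ∈ Mmin.verts
      · obtain ⟨x', hx', hux'⟩ := hMmin.1 hx
        by_cases hA : x' = u'
        · have hxu : x = u := by
            obtain ⟨y, hy, huy⟩ := hMmin.1 hu'
            rw [huy x (hA ▸ hx').symm, huy u huu'.symm]
          subst hxu
          exact ⟨w₀, Or.inr rfl, hw₀u⟩
        · by_cases hB : x' = v'
          · have hxv : x = v := by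
              obtain ⟨y, hy, huy⟩ := hMmin.1 hv'
              rw [huy x (hB ▸ hx').symm, huy v hvv'.symm]
            subst hxv
            exact ⟨w₀, Or.inr rfl, hw₀v⟩
          · exact ⟨x', Or.inl ⟨hx'.snd_mem, by simp [hA, hB]⟩, hx'.adj_sub⟩
      · by_contra hno
        push_neg at hno
        have hsub : G.neighborSet x ⊆ {u', v'} := by
          intro y hy
          have hym : y ∈ Mmin.verts := by
            by_contra hym
            exact outside_not_adj hMmin hx hym hy
          by_contra hyn
          exact hno y (Or.inl ⟨hym, hyn⟩) hy
        have hd2 := two_le_deg h2 x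
        have heqn : G.neighborSet x = {u', v'} :=
          Set.eq_of_subset_of_ncard_le hsub
            (by rw [Set.ncard_pair hne']; exact hd2) (Set.toFinite _)
        exact hnx x heqn
    have hdsub : ({u', v'} : Set V) ⊆ Mmin.verts := by
      intro y hy
      rcases hy with rfl | hy
      · exact hu'
      · rw [Set.mem_singleton_iff] at hy; subst hy; exact hv'
    have hcard : ((Mmin.verts \ {u', v'}) ∪ {w₀}).ncard = Mmin.verts.ncard - 2 + 1 := by
      rw [Set.union_singleton, Set.ncard_insert_of_notMem (fun h => hw₀ h.1),
        Set.ncard_diff hdsub, Set.ncard_pair hne']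
    have hγS : gammaT G ≤ ((Mmin.verts \ {u', v'}) ∪ {w₀}).ncard := Nat.sInf_le ⟨_, hTDS, rfl⟩
    have hpos : 2 ≤ Mmin.verts.ncard := by
      calc 2 = ({u', v'} : Set V).ncard := (Set.ncard_pair hne').symm
        _ ≤ Mmin.verts.ncard := Set.ncard_le_ncard hdsub (Set.toFinite _)
    omega
  · rintro ⟨M, hMmax, hc1, hc2⟩
    have hμ_le : muStar G ≤ M.edgeSet.ncard := Nat.sInf_le ⟨M, hMmax, rfl⟩
    have hlow : ∀ S : Set V, IsTotalDomSet G S → M.verts.ncard ≤ S.ncard := by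
      intro S hS
      set p : V → V := fun a => if h : a ∈ M.verts then (hMmax.1 h).exists.choose else a with hp
      have hpadj : ∀ a, a ∈ M.verts → M.Adj a (p a) := fun a ha => by
        simp only [hp, dif_pos ha]; exact (hMmax.1 ha).exists.choose_spec
      have hpu : ∀ a, a ∈ M.verts → ∀ w, M.Adj a w → w = p a := fun a ha w hw =>
        (hMmax.1 ha).unique hw (hpadj a ha)
      set d : V → V := fun a => (hS a).choose with hd
      have hdS : ∀ a, d a ∈ S := fun a => (hS a).choose_spec.1
      have hdadj : ∀ a, G.Adj a (d a) := fun a => (hS a).choose_spec.2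
      set φ : V → V := fun a => if p a ∈ S then p a else d a with hφ
      refine Set.ncard_le_ncard_of_injOn φ ?_ ?_ (Set.toFinite _)
      · intro a _
        simp only [hφ]
        split_ifs with h
        · exact h
        · exact hdS a
      · intro a ha b hb hab
        simp only [hφ] at hab
        split_ifs at hab with h1 h2 h2
        · obtain ⟨y, hy, huy⟩ := hMmax.1 (hpadj a ha).snd_mem
          have ha' : a = y := huy a (hpadj a ha).symm
          have hb' : b = y := by
            refine huy b ?_
            have : M.Adj b (p a) := by rw [hab]; exact hpadj b hb
            exact this.symm
          rw [ha', hb']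
        · exfalso
          have hGadj : G.Adj b (p a) := by rw [hab]; exact hdadj b
          have : p a = p b := hc1 b hb (p b) (hpadj b hb) (p a) (hpadj a ha).snd_mem hGadj
          exact h2 (this ▸ h1)
        · exfalso
          have hGadj : G.Adj a (p b) := by rw [← hab]; exact hdadj a
          have : p b = p a := hc1 a ha (p a) (hpadj a ha) (p b) (hpadj b hb).snd_mem hGadj
          exact h1 (this ▸ h2)
        · by_contra hne
          obtain ⟨x, hx⟩ := hc2 a b ha hb hne
            ⟨d a, hdadj a, by rw [hab]; exact hdadj b⟩
            (p a) (p b) (hpadj a ha) (hpadj b hb)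
          obtain ⟨s, hsS, hsadj⟩ := hS x
          have hmem : s ∈ G.neighborSet x := hsadj
          rw [hx] at hmem
          rcases hmem with rfl | hmem
          · exact h1 hsS
          · rw [Set.mem_singleton_iff] at hmem; subst hmem; exact h2 hsS
    have hγ_ge : 2 * muStar G ≤ gammaT G := by
      obtain ⟨S₀, hS₀, hS₀c⟩ : ∃ S : Set V, IsTotalDomSet G S ∧ S.ncard = gammaT G :=
        Nat.sInf_mem (s := {n | ∃ S : Set V, IsTotalDomSet G S ∧ S.ncard = n})
          ⟨M.verts.ncard, M.verts, verts_tds h2 hMmax, rfl⟩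
      have h1 := hlow S₀ hS₀
      have h2' := matching_verts_ncard hMmax.1
      omega
    omega


end TotalDomMM
end
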